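/- Let n ≥ 1, let b : 𝔹ⁿ → 𝔹ⁿ be a holomorphic map of the open unit ball into itself, let α ≥ 1 be a real number, and suppose the kernel K^{b,α}(z,w) = ((1 − ⟨b(z), b(w)⟩)/(1 − ⟨z,w⟩))^α (principal branch) is positive semidefinite on 𝔹ⁿ. Define g(z) = (1 − ⟨b(z), b(0)⟩)^{−α}. Then the kernel (z,w) ↦ ((1 − |b(0)|)^{−2α} − g(z)·conj(g(w))) · (1 − ⟨z,w⟩)^{−α} is positive semidefinite on 𝔹ⁿ, where |b(0)| = (∑_{i=1}^n |b_i(0)|²)^{1/2}. (This is the second assertion of the ball lemma: 1/K^{b,α}(·,0) is a multiplier of H²_{n,α} of norm at most (1 − |b(0)|)^{−α}.) -/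

import Mathlib

open Complex Metric ComplexConjugate
open scoped ComplexOrder

noncomputable section

/-- A kernel `K : X → X → ℂ` is positive semidefinite on a set `S`: for all finite
families of points of `S` and scalars, the associated quadratic form is a
nonnegative real number (using the partial order on `ℂ`). -/
def IsPSDKernelOn {X : Type*} (K : X → X → ℂ) (S : Set X) : Prop :=
  ∀ (n : ℕ) (x : Fin n → X), (∀ i, x i ∈ S) → ∀ c : Fin n → ℂ,
    0 ≤ ∑ i, ∑ j, c i * conj (c j) * K (x i) (x j)

/-!
Write `f(u) = (1 - ⟨u, b(0)⟩)^{-α}` and `M = (1 - |b(0)|)^{-α}`. On the ball the kernel in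
question is the Schur product of `K^{b,α}` with the pullback under `b` of
`(M² - f(u) conj f(v)) k_α(u, v)`, `k_α(u, v) = (1 - ⟨u, v⟩)^{-α}`, so it suffices that `f` is a
multiplier of `k_α` of norm at most `M`. Realising a positive kernel at finitely many points as a
Gram matrix shows that multiplier norms are subadditive and submultiplicative, so
`f = ∑ₘ (α)ₘ/m! ⟨·, b(0)⟩ᵐ` has norm at most `∑ₘ (α)ₘ/m! |b(0)|ᵐ = M` as soon as `ℓ = ⟨·, v⟩` has
norm at most `|v|`. For `α ≥ 1` this comes from
`(|v|² - ℓ(z) conj ℓ(w)) k_α = (|v|² + (|v|² ⟨z, w⟩ - ℓ(z) conj ℓ(w)) k_1) k_{α-1}`, where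
`|v|² ⟨z, w⟩ - ℓ(z) conj ℓ(w)` is positive by Cauchy–Schwarz and the `k_β`, `β ≥ 0`, are
positive as power series in `⟨z, w⟩` with nonnegative coefficients.
-/

open Filter Topology
open scoped InnerProductSpace Matrix

namespace Matrix

variable {n : Type*} [Fintype n]

theorem posSemidef_iff_dotProduct_mulVec_nonneg_complex {A : Matrix n n ℂ} :
    A.PosSemidef ↔ ∀ x, 0 ≤ star x ⬝ᵥ (A *ᵥ x) := by
  classical
  refine ⟨fun h => h.dotProduct_mulVec_nonneg, fun h => ?_⟩
  rw [← isPositive_toEuclideanLin_iff, LinearMap.isPositive_iff_complex]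
  intro x
  obtain ⟨hre, him⟩ := Complex.nonneg_iff.mp (h (WithLp.ofLp x))
  have hinner : ⟪A.toEuclideanLin x, x⟫_ℂ = star (WithLp.ofLp x) ⬝ᵥ (A *ᵥ WithLp.ofLp x) := by
    rw [EuclideanSpace.inner_eq_star_dotProduct, toLpLin_apply, dotProduct_comm,
      ← star_star (WithLp.ofLp x), star_dotProduct_star, star_star, Complex.star_def,
      Complex.conj_eq_iff_im.mpr him.symm]
  rw [hinner]
  exact ⟨Complex.conj_eq_iff_re.mp (Complex.conj_eq_iff_im.mpr him.symm), hre⟩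

end Matrix

section Kernel

variable {X : Type*} {K L : X → X → ℂ} {S : Set X}

theorem isPSDKernelOn_iff_posSemidef : IsPSDKernelOn K S ↔
    ∀ n (x : Fin n → X), (∀ i, x i ∈ S) → (Matrix.of fun i j => K (x j) (x i)).PosSemidef := by
  have hform : ∀ n (x : Fin n → X) (c : Fin n → ℂ),
      star c ⬝ᵥ ((Matrix.of fun i j => K (x j) (x i)) *ᵥ c) =
        ∑ i, ∑ j, c i * conj (c j) * K (x i) (x j) := by
    intro n x c
    simp only [dotProduct, Matrix.mulVec, Matrix.of_apply, Finset.mul_sum, Pi.star_apply,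
      Complex.star_def]
    rw [Finset.sum_comm]
    exact Finset.sum_congr rfl fun i _ => Finset.sum_congr rfl fun j _ => by ring
  simp only [Matrix.posSemidef_iff_dotProduct_mulVec_nonneg_complex, hform]
  rfl

theorem IsPSDKernelOn.congr (hK : IsPSDKernelOn K S) (h : ∀ z ∈ S, ∀ w ∈ S, K z w = L z w) :
    IsPSDKernelOn L S := fun n x hx c => by
  convert hK n x hx c using 1
  exact Finset.sum_congr rfl fun i _ => Finset.sum_congr rfl fun j _ => by
    rw [h _ (hx i) _ (hx j)]

theorem IsPSDKernelOn.comp {Y : Type*} {K : Y → Y → ℂ} {T : Set Y} (hK : IsPSDKernelOn K T)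
    {b : X → Y} (hb : Set.MapsTo b S T) : IsPSDKernelOn (fun z w => K (b z) (b w)) S :=
  fun n x hx => hK n (b ∘ x) fun i => hb (hx i)

theorem isPSDKernelOn_one : IsPSDKernelOn (fun _ _ : X => (1 : ℂ)) S := fun n x _ c => by
  have : ∑ i, ∑ j, c i * conj (c j) * 1 = (∑ i, c i) * conj (∑ i, c i) := by
    simp only [mul_one, Finset.sum_mul, Finset.mul_sum, map_sum]
    exact Finset.sum_comm
  rw [this, Complex.mul_conj]
  exact Complex.zero_le_real.mpr (Complex.normSq_nonneg _)

theorem IsPSDKernelOn.add (hK : IsPSDKernelOn K S) (hL : IsPSDKernelOn L S) :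
    IsPSDKernelOn (fun z w => K z w + L z w) S := fun n x hx c => by
  simpa only [mul_add, Finset.sum_add_distrib] using add_nonneg (hK n x hx c) (hL n x hx c)

theorem IsPSDKernelOn.sum {ι : Type*} (s : Finset ι) {K : ι → X → X → ℂ}
    (hK : ∀ k ∈ s, IsPSDKernelOn (K k) S) : IsPSDKernelOn (fun z w => ∑ k ∈ s, K k z w) S :=
  fun n x hx c => by
  have : ∑ i, ∑ j, c i * conj (c j) * ∑ k ∈ s, K k (x i) (x j) =
      ∑ k ∈ s, ∑ i, ∑ j, c i * conj (c j) * K k (x i) (x j) := by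
    simp only [Finset.mul_sum]
    exact (Finset.sum_congr rfl fun i _ => Finset.sum_comm).trans Finset.sum_comm
  rw [this]
  exact Finset.sum_nonneg fun k hk => hK k hk n x hx c

theorem IsPSDKernelOn.ofReal_mul (hK : IsPSDKernelOn K S) {t : ℝ} (ht : 0 ≤ t) :
    IsPSDKernelOn (fun z w => (t : ℂ) * K z w) S := fun n x hx c => by
  have : ∑ i, ∑ j, c i * conj (c j) * ((t : ℂ) * K (x i) (x j)) =
      t * ∑ i, ∑ j, c i * conj (c j) * K (x i) (x j) := by
    simp only [Finset.mul_sum]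
    exact Finset.sum_congr rfl fun i _ => Finset.sum_congr rfl fun j _ => by ring
  rw [this]
  exact mul_nonneg (Complex.zero_le_real.mpr ht) (hK n x hx c)

theorem IsPSDKernelOn.mul (hK : IsPSDKernelOn K S) (hL : IsPSDKernelOn L S) :
    IsPSDKernelOn (fun z w => K z w * L z w) S := by
  rw [isPSDKernelOn_iff_posSemidef] at *
  exact fun n x hx => (hK n x hx).hadamard (hL n x hx)

theorem IsPSDKernelOn.pow (hK : IsPSDKernelOn K S) (k : ℕ) :
    IsPSDKernelOn (fun z w => K z w ^ k) S := by
  induction k with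
  | zero => simpa using isPSDKernelOn_one
  | succ k ih => simpa only [pow_succ] using ih.mul hK

theorem IsPSDKernelOn.of_tendsto {ι : Type*} {l : Filter ι} [l.NeBot] {K : ι → X → X → ℂ}
    (hK : ∀ k, IsPSDKernelOn (K k) S)
    (h : ∀ z ∈ S, ∀ w ∈ S, Tendsto (fun k => K k z w) l (𝓝 (L z w))) : IsPSDKernelOn L S :=
  fun n x hx c => ge_of_tendsto'
    (tendsto_finsetSum _ fun i _ => tendsto_finsetSum _ fun j _ =>
      (h _ (hx i) _ (hx j)).const_mul _)
    fun k => hK k n x hx c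

theorem IsPSDKernelOn.hasSum (hK : IsPSDKernelOn K S) {a : ℕ → ℝ} (ha : ∀ k, 0 ≤ a k)
    (hL : ∀ z ∈ S, ∀ w ∈ S, HasSum (fun k => (a k : ℂ) * K z w ^ k) (L z w)) :
    IsPSDKernelOn L S :=
  .of_tendsto (fun N => .sum (Finset.range N) fun k _ => (hK.pow k).ofReal_mul (ha k))
    fun z hz w hw => (hL z hz w hw).tendsto_sum_nat

end Kernel

section Gram

variable {E : Type*} [NormedAddCommGroup E] [InnerProductSpace ℂ E]

theorem sum_sum_mul_conj_mul_inner {ι : Type*} [Fintype ι] (c : ι → ℂ) (e : ι → E) :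
    ∑ i, ∑ j, c i * conj (c j) * ⟪e j, e i⟫_ℂ = ((‖∑ i, c i • e i‖ ^ 2 : ℝ) : ℂ) := by
  rw [Complex.ofReal_pow, ← Complex.coe_algebraMap, ← inner_self_eq_norm_sq_to_K, sum_inner,
    Finset.sum_comm]
  simp only [inner_sum, inner_smul_left, inner_smul_right]
  exact Finset.sum_congr rfl fun j _ => Finset.sum_congr rfl fun i _ => by ring

theorem sum_sum_mul_conj_mul_sub_mul_inner {ι : Type*} [Fintype ι] (c a : ι → ℂ) (t : ℝ)
    (e : ι → E) :
    ∑ i, ∑ j, c i * conj (c j) * (((t : ℂ) ^ 2 - a i * conj (a j)) * ⟪e j, e i⟫_ℂ) =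
      ((t ^ 2 * ‖∑ i, c i • e i‖ ^ 2 - ‖∑ i, (a i * c i) • e i‖ ^ 2 : ℝ) : ℂ) := by
  rw [Complex.ofReal_sub, Complex.ofReal_mul, ← sum_sum_mul_conj_mul_inner,
    ← sum_sum_mul_conj_mul_inner, Finset.mul_sum, ← Finset.sum_sub_distrib]
  refine Finset.sum_congr rfl fun i _ => ?_
  rw [Finset.mul_sum, ← Finset.sum_sub_distrib]
  refine Finset.sum_congr rfl fun j _ => ?_
  simp only [map_mul, Complex.ofReal_pow]
  ring

theorem isPSDKernelOn_inner (S : Set E) : IsPSDKernelOn (fun z w : E => ⟪w, z⟫_ℂ) S :=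
  fun n x _ c => by
  rw [sum_sum_mul_conj_mul_inner]
  exact Complex.zero_le_real.mpr (sq_nonneg _)

open scoped MatrixOrder in
theorem IsPSDKernelOn.exists_inner_eq {X : Type*} {K : X → X → ℂ} {S : Set X}
    (hK : IsPSDKernelOn K S) {n : ℕ} {x : Fin n → X} (hx : ∀ i, x i ∈ S) :
    ∃ e : Fin n → EuclideanSpace ℂ (Fin n), ∀ i j, K (x i) (x j) = ⟪e j, e i⟫_ℂ := by
  obtain ⟨B, hB⟩ := CStarAlgebra.nonneg_iff_eq_star_mul_self.mp
    (isPSDKernelOn_iff_posSemidef.mp hK n x hx).nonneg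
  refine ⟨fun i => WithLp.toLp 2 fun t => B t i, fun i j => ?_⟩
  have := congrFun (congrFun hB j) i
  simp only [Matrix.of_apply] at this
  rw [this, EuclideanSpace.inner_eq_star_dotProduct]
  simp [Matrix.mul_apply, dotProduct, mul_comm]

end Gram

theorem Ring.multichoose_nonneg {β : ℝ} (hβ : 0 ≤ β) (k : ℕ) : 0 ≤ Ring.multichoose β k := by
  have hpos : 0 ≤ (ascPochhammer ℝ k).eval β := by
    induction k with
    | zero => simp
    | succ k ih => rw [ascPochhammer_succ_eval]; exact mul_nonneg ih (by positivity)
  have h := Ring.factorial_nsmul_multichoose_eq_ascPochhammer β k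
  rw [Polynomial.ascPochhammer_smeval_eq_eval, nsmul_eq_mul] at h
  exact nonneg_of_mul_nonneg_right (h ▸ hpos) (by positivity)

theorem Complex.hasSum_multichoose_mul_pow (β : ℝ) {s : ℂ} (hs : ‖s‖ < 1) :
    HasSum (fun k => ((Ring.multichoose β k : ℝ) : ℂ) * s ^ k) ((1 - s) ^ (-(β : ℂ))) := by
  have hs' : s ∈ Metric.eball (0 : ℂ) 1 := by
    rw [← ENNReal.ofReal_one, Metric.eball_ofReal]
    simpa using hs
  have h := (Complex.one_div_one_sub_cpow_hasFPowerSeriesOnBall_zero β).hasSum hs'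
  simp only [FormalMultilinearSeries.ofScalars_apply_eq, smul_eq_mul, zero_add] at h
  simpa only [Ring.multichoose_eq, Complex.ofReal_choose, Complex.ofReal_sub, Complex.ofReal_add,
    Complex.ofReal_natCast, Complex.ofReal_one, one_div, ← Complex.cpow_neg] using h

theorem Real.hasSum_multichoose_mul_pow (β : ℝ) {r : ℝ} (hr₀ : 0 ≤ r) (hr : r < 1) :
    HasSum (fun k => Ring.multichoose β k * r ^ k) ((1 - r) ^ (-β)) := by
  have h := Complex.hasSum_multichoose_mul_pow β (s := r) (by simpa [abs_of_nonneg hr₀] using hr)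
  rw [← Complex.ofReal_one, ← Complex.ofReal_sub, ← Complex.ofReal_neg,
    ← Complex.ofReal_cpow (by linarith)] at h
  exact_mod_cast h

def IsMultiplierOn {X : Type*} (k : X → X → ℂ) (S : Set X) (f : X → ℂ) (M : ℝ) : Prop :=
  IsPSDKernelOn (fun z w => ((M : ℂ) ^ 2 - f z * conj (f w)) * k z w) S

section Multiplier

variable {X : Type*} {k : X → X → ℂ} {S : Set X} {f g : X → ℂ} {M N : ℝ}

theorem isMultiplierOn_iff_norm_le (hk : IsPSDKernelOn k S) (hM : 0 ≤ M) :
    IsMultiplierOn k S f M ↔ ∀ n (x : Fin n → X), (∀ i, x i ∈ S) →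
      ∀ e : Fin n → EuclideanSpace ℂ (Fin n), (∀ i j, k (x i) (x j) = ⟪e j, e i⟫_ℂ) →
      ∀ c : Fin n → ℂ, ‖∑ i, (f (x i) * c i) • e i‖ ≤ M * ‖∑ i, c i • e i‖ := by
  have hform : ∀ n (x : Fin n → X) (e : Fin n → EuclideanSpace ℂ (Fin n)),
      (∀ i j, k (x i) (x j) = ⟪e j, e i⟫_ℂ) → ∀ c : Fin n → ℂ,
      (0 ≤ ∑ i, ∑ j, c i * conj (c j) * (((M : ℂ) ^ 2 - f (x i) * conj (f (x j))) * k (x i) (x j))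
        ↔ ‖∑ i, (f (x i) * c i) • e i‖ ≤ M * ‖∑ i, c i • e i‖) := by
    intro n x e he c
    simp only [he, sum_sum_mul_conj_mul_sub_mul_inner, Complex.zero_le_real, sub_nonneg]
    rw [← mul_pow, pow_le_pow_iff_left₀ (norm_nonneg _) (by positivity) two_ne_zero]
  refine ⟨fun h n x hx e he c => (hform n x e he c).mp (h n x hx c), fun h n x hx c => ?_⟩
  obtain ⟨e, he⟩ := hk.exists_inner_eq hx
  exact (hform n x e he c).mpr (h n x hx e he c)

namespace IsMultiplierOn

theorem zero : IsMultiplierOn k S 0 0 := fun _ _ _ _ => by simp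

theorem one : IsMultiplierOn k S 1 1 := fun _ _ _ _ => by simp

theorem mono (hk : IsPSDKernelOn k S) (h : IsMultiplierOn k S f M) (hM : 0 ≤ M) (hMN : M ≤ N) :
    IsMultiplierOn k S f N :=
  ((hk.ofReal_mul (t := N ^ 2 - M ^ 2) (by nlinarith)).add h).congr fun z _ w _ => by
    push_cast
    ring

theorem const_mul (h : IsMultiplierOn k S f M) (a : ℂ) :
    IsMultiplierOn k S (fun z => a * f z) (‖a‖ * M) :=
  (h.ofReal_mul (sq_nonneg ‖a‖)).congr fun z _ w _ => by
    have ha : a * conj a = (‖a‖ : ℂ) ^ 2 := Complex.mul_conj' a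
    push_cast
    rw [map_mul]
    linear_combination f z * conj (f w) * k z w * ha

theorem add (hk : IsPSDKernelOn k S) (hf : IsMultiplierOn k S f M) (hg : IsMultiplierOn k S g N)
    (hM : 0 ≤ M) (hN : 0 ≤ N) : IsMultiplierOn k S (f + g) (M + N) := by
  rw [isMultiplierOn_iff_norm_le hk hM] at hf
  rw [isMultiplierOn_iff_norm_le hk hN] at hg
  rw [isMultiplierOn_iff_norm_le hk (add_nonneg hM hN)]
  intro n x hx e he c
  calc ‖∑ i, ((f + g) (x i) * c i) • e i‖
      = ‖∑ i, (f (x i) * c i) • e i + ∑ i, (g (x i) * c i) • e i‖ := by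
        simp only [Pi.add_apply, add_mul, add_smul, Finset.sum_add_distrib]
    _ ≤ M * ‖∑ i, c i • e i‖ + N * ‖∑ i, c i • e i‖ :=
        (norm_add_le _ _).trans (add_le_add (hf n x hx e he c) (hg n x hx e he c))
    _ = (M + N) * ‖∑ i, c i • e i‖ := by ring

theorem mul (hk : IsPSDKernelOn k S) (hf : IsMultiplierOn k S f M) (hg : IsMultiplierOn k S g N)
    (hM : 0 ≤ M) (hN : 0 ≤ N) : IsMultiplierOn k S (f * g) (M * N) := by
  rw [isMultiplierOn_iff_norm_le hk hM] at hf
  rw [isMultiplierOn_iff_norm_le hk hN] at hg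
  rw [isMultiplierOn_iff_norm_le hk (mul_nonneg hM hN)]
  intro n x hx e he c
  calc ‖∑ i, ((f * g) (x i) * c i) • e i‖ = ‖∑ i, (f (x i) * (g (x i) * c i)) • e i‖ := by
        simp only [Pi.mul_apply, mul_assoc]
    _ ≤ M * ‖∑ i, (g (x i) * c i) • e i‖ := hf n x hx e he _
    _ ≤ M * (N * ‖∑ i, c i • e i‖) := mul_le_mul_of_nonneg_left (hg n x hx e he c) hM
    _ = M * N * ‖∑ i, c i • e i‖ := by ring

theorem pow (hk : IsPSDKernelOn k S) (hf : IsMultiplierOn k S f M) (hM : 0 ≤ M) (m : ℕ) :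
    IsMultiplierOn k S (f ^ m) (M ^ m) := by
  induction m with
  | zero => simpa using one
  | succ m ih => simpa only [pow_succ] using ih.mul hk hf (pow_nonneg hM m) hM

theorem sum (hk : IsPSDKernelOn k S) {ι : Type*} (s : Finset ι) {F : ι → X → ℂ} {M : ι → ℝ}
    (hF : ∀ i ∈ s, IsMultiplierOn k S (F i) (M i)) (hM : ∀ i ∈ s, 0 ≤ M i) :
    IsMultiplierOn k S (∑ i ∈ s, F i) (∑ i ∈ s, M i) := by
  classical
  induction s using Finset.induction_on with
  | empty => simpa using zero
  | insert i s hi ih =>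
    rw [Finset.sum_insert hi, Finset.sum_insert hi]
    exact (hF i (s.mem_insert_self i)).add hk (ih (fun j hj => hF j (Finset.mem_insert_of_mem hj))
      fun j hj => hM j (Finset.mem_insert_of_mem hj)) (hM i (s.mem_insert_self i))
      (Finset.sum_nonneg fun j hj => hM j (Finset.mem_insert_of_mem hj))

theorem of_tendsto {ι : Type*} {l : Filter ι} [l.NeBot] {F : ι → X → ℂ}
    (hF : ∀ i, IsMultiplierOn k S (F i) M) (h : ∀ z ∈ S, Tendsto (fun i => F i z) l (𝓝 (f z))) :
    IsMultiplierOn k S f M :=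
  IsPSDKernelOn.of_tendsto hF fun z hz w hw =>
    ((tendsto_const_nhds.sub ((h z hz).mul
      ((Complex.continuous_conj.tendsto _).comp (h w hw)))).mul_const _)

theorem hasSum (hk : IsPSDKernelOn k S) {φ : X → ℂ} {r : ℝ} (hφ : IsMultiplierOn k S φ r)
    (hr : 0 ≤ r) {a : ℕ → ℂ} {R : ℝ} (hR : HasSum (fun m => ‖a m‖ * r ^ m) R)
    (hf : ∀ z ∈ S, HasSum (fun m => a m * φ z ^ m) (f z)) : IsMultiplierOn k S f R := by
  refine of_tendsto (F := fun N => ∑ m ∈ Finset.range N, fun z => a m * (φ ^ m) z)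
    (fun N => ?_) fun z hz => by simpa [Finset.sum_apply] using (hf z hz).tendsto_sum_nat
  refine (sum hk _ (fun m _ => (hφ.pow hk hr m).const_mul (a m)) fun m _ => by positivity).mono hk
    (Finset.sum_nonneg fun m _ => by positivity)
    (sum_le_hasSum _ (fun m _ => by positivity) hR)

end IsMultiplierOn

end Multiplier

-- Mathlib's inner product is conjugate-linear in its first argument: `⟨z, w⟩` is `⟪w, z⟫_ℂ`.

section Ball

variable {E : Type*} [NormedAddCommGroup E] [InnerProductSpace ℂ E]

theorem norm_inner_lt_one {z w : E} (hz : z ∈ ball (0 : E) 1) (hw : w ∈ ball (0 : E) 1) :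
    ‖⟪w, z⟫_ℂ‖ < 1 :=
  (norm_inner_le_norm w z).trans_lt <| mul_lt_one_of_nonneg_of_lt_one_left (norm_nonneg w)
    (mem_ball_zero_iff.mp hw) (mem_ball_zero_iff.mp hz).le

theorem re_one_sub_inner_pos {z w : E} (hz : z ∈ ball (0 : E) 1) (hw : w ∈ ball (0 : E) 1) :
    0 < (1 - ⟪w, z⟫_ℂ).re := by
  rw [Complex.sub_re, Complex.one_re, sub_pos]
  exact (Complex.re_le_norm _).trans_lt (norm_inner_lt_one hz hw)

theorem isPSDKernelOn_one_sub_inner_cpow_neg {β : ℝ} (hβ : 0 ≤ β) :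
    IsPSDKernelOn (fun z w : E => (1 - ⟪w, z⟫_ℂ) ^ (-(β : ℂ))) (ball 0 1) :=
  (isPSDKernelOn_inner _).hasSum (Ring.multichoose_nonneg hβ) fun _ hz _ hw =>
    Complex.hasSum_multichoose_mul_pow β (norm_inner_lt_one hz hw)

theorem isPSDKernelOn_norm_sq_mul_inner_sub (v : E) (S : Set E) :
    IsPSDKernelOn (fun z w : E => (‖v‖ : ℂ) ^ 2 * ⟪w, z⟫_ℂ - ⟪v, z⟫_ℂ * conj ⟪v, w⟫_ℂ) S :=
  fun n x _ c => by
  have hform : ∑ i, ∑ j, c i * conj (c j) *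
      ((‖v‖ : ℂ) ^ 2 * ⟪x j, x i⟫_ℂ - ⟪v, x i⟫_ℂ * conj ⟪v, x j⟫_ℂ) =
      (‖v‖ : ℂ) ^ 2 * ((‖∑ i, c i • x i‖ ^ 2 : ℝ) : ℂ) -
        ⟪v, ∑ i, c i • x i⟫_ℂ * conj ⟪v, ∑ i, c i • x i⟫_ℂ := by
    rw [← sum_sum_mul_conj_mul_inner, inner_sum, map_sum, Finset.sum_mul, Finset.mul_sum,
      ← Finset.sum_sub_distrib]
    refine Finset.sum_congr rfl fun i _ => ?_
    rw [Finset.mul_sum, Finset.mul_sum, ← Finset.sum_sub_distrib]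
    refine Finset.sum_congr rfl fun j _ => ?_
    simp only [inner_smul_right, map_mul]
    ring
  rw [hform, Complex.mul_conj']
  have hcs := pow_le_pow_left₀ (norm_nonneg _) (norm_inner_le_norm (𝕜 := ℂ) v (∑ i, c i • x i)) 2
  rw [mul_pow] at hcs
  exact_mod_cast sub_nonneg.mpr hcs

theorem isMultiplierOn_inner (v : E) {α : ℝ} (hα : 1 ≤ α) :
    IsMultiplierOn (fun z w : E => (1 - ⟪w, z⟫_ℂ) ^ (-(α : ℂ))) (ball 0 1)
      (fun z => ⟪v, z⟫_ℂ) ‖v‖ := by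
  have hk₁ := isPSDKernelOn_one_sub_inner_cpow_neg (E := E) zero_le_one
  have hkα := isPSDKernelOn_one_sub_inner_cpow_neg (E := E) (sub_nonneg.mpr hα)
  refine ((((isPSDKernelOn_one.ofReal_mul (sq_nonneg ‖v‖)).add
    ((isPSDKernelOn_norm_sq_mul_inner_sub v _).mul hk₁)).mul hkα).congr fun z hz w hw => ?_)
  have hne : 1 - ⟪w, z⟫_ℂ ≠ 0 := Complex.ne_zero_of_re_pos (re_one_sub_inner_pos hz hw)
  have hsplit : (1 - ⟪w, z⟫_ℂ) ^ (-(α : ℂ)) =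
      (1 - ⟪w, z⟫_ℂ)⁻¹ * (1 - ⟪w, z⟫_ℂ) ^ (-((α - 1 : ℝ) : ℂ)) := by
    rw [← Complex.cpow_neg_one, ← Complex.cpow_add _ _ hne]
    push_cast
    ring_nf
  simp only [Complex.ofReal_one, Complex.cpow_neg_one, hsplit]
  field_simp
  push_cast
  ring

theorem isMultiplierOn_one_sub_inner_cpow_neg {v : E} (hv : v ∈ ball (0 : E) 1) {α : ℝ}
    (hα : 1 ≤ α) :
    IsMultiplierOn (fun z w : E => (1 - ⟪w, z⟫_ℂ) ^ (-(α : ℂ))) (ball 0 1)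
      (fun z => (1 - ⟪v, z⟫_ℂ) ^ (-(α : ℂ))) ((1 - ‖v‖) ^ (-α)) := by
  have hcoeff : ∀ m, ‖((Ring.multichoose α m : ℝ) : ℂ)‖ = Ring.multichoose α m := fun m => by
    rw [Complex.norm_real, Real.norm_of_nonneg (Ring.multichoose_nonneg (by linarith) m)]
  refine (isMultiplierOn_inner v hα).hasSum (isPSDKernelOn_one_sub_inner_cpow_neg (by linarith))
    (norm_nonneg v) ?_ fun z hz => Complex.hasSum_multichoose_mul_pow α (norm_inner_lt_one hz hv)
  simpa only [hcoeff] using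
    Real.hasSum_multichoose_mul_pow α (norm_nonneg v) (mem_ball_zero_iff.mp hv)

end Ball

theorem Complex.div_cpow_of_re_pos {a e : ℂ} (ha : 0 < a.re) (he : 0 < e.re) (y : ℂ) :
    (a / e) ^ y = a ^ y / e ^ y := by
  have ha0 := Complex.ne_zero_of_re_pos ha
  have he0 := Complex.ne_zero_of_re_pos he
  have harg_a := abs_lt.mp (Complex.abs_arg_lt_pi_div_two_iff.mpr (Or.inl ha))
  have harg_e := abs_lt.mp (Complex.abs_arg_lt_pi_div_two_iff.mpr (Or.inl he))
  have harg_e' : e.arg ≠ Real.pi := by linarith [Real.pi_pos]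
  have hlog : Complex.log (a / e) = Complex.log a - Complex.log e := by
    rw [div_eq_mul_inv, Complex.log_mul_eq_add_log_iff ha0 (inv_ne_zero he0) |>.mpr,
      Complex.log_inv e harg_e', sub_eq_add_neg]
    rw [Complex.arg_inv, if_neg harg_e']
    constructor <;> linarith
  rw [Complex.cpow_def_of_ne_zero (div_ne_zero ha0 he0), hlog, Complex.cpow_def_of_ne_zero ha0,
    Complex.cpow_def_of_ne_zero he0, ← Complex.exp_sub, sub_mul]

theorem ball_reciprocal_kernel_multiplier_general
    (n : ℕ)
    (b : EuclideanSpace ℂ (Fin n) → EuclideanSpace ℂ (Fin n))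
    (hb_maps : ∀ z ∈ ball (0 : EuclideanSpace ℂ (Fin n)) 1,
      b z ∈ ball (0 : EuclideanSpace ℂ (Fin n)) 1)
    (α : ℝ) (hα : 1 ≤ α)
    (hpos : IsPSDKernelOn
      (fun z w => ((1 - ∑ i, b z i * conj (b w i)) / (1 - ∑ i, z i * conj (w i))) ^ (α : ℂ))
      (ball (0 : EuclideanSpace ℂ (Fin n)) 1))
    (g : EuclideanSpace ℂ (Fin n) → ℂ)
    (hg : ∀ z, g z = (1 - ∑ i, b z i * conj (b 0 i)) ^ (-(α : ℂ))) :
    IsPSDKernelOn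
      (fun z w => ((((1 - ‖b 0‖) ^ (-(2 * α)) : ℝ) : ℂ) - g z * conj (g w)) *
        (1 - ∑ i, z i * conj (w i)) ^ (-(α : ℂ)))
      (ball (0 : EuclideanSpace ℂ (Fin n)) 1) := by
  have hinner : ∀ z w : EuclideanSpace ℂ (Fin n), ∑ i, z i * conj (w i) = ⟪w, z⟫_ℂ :=
    fun z w => rfl
  simp only [hinner] at hpos hg ⊢
  have hb0 := hb_maps 0 (mem_ball_self one_pos)
  have hM : (((1 - ‖b 0‖) ^ (-(2 * α)) : ℝ) : ℂ) = (((1 - ‖b 0‖) ^ (-α) : ℝ) : ℂ) ^ 2 := by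
    rw [← Complex.ofReal_pow, ← Real.rpow_natCast,
      ← Real.rpow_mul (by linarith [mem_ball_zero_iff.mp hb0])]
    ring_nf
  refine (((isMultiplierOn_one_sub_inner_cpow_neg hb0 hα).comp hb_maps).mul hpos).congr
    fun z hz w hw => ?_
  have ha := re_one_sub_inner_pos (hb_maps z hz) (hb_maps w hw)
  have he := re_one_sub_inner_pos hz hw
  have hA : (1 - ⟪b w, b z⟫_ℂ) ^ (α : ℂ) ≠ 0 :=
    Complex.cpow_ne_zero_iff.mpr (Or.inl (Complex.ne_zero_of_re_pos ha))
  beta_reduce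
  rw [hM, hg, hg, Complex.div_cpow_of_re_pos ha he, Complex.cpow_neg (1 - ⟪b w, b z⟫_ℂ),
    Complex.cpow_neg (1 - ⟪w, z⟫_ℂ)]
  field_simp

/-- Second assertion of the ball lemma: if `K^{b,α}` is positive semidefinite,
then `g(z) = (1 − ⟨b z, b 0⟩)^{−α} = 1/K^{b,α}(z,0)` is a multiplier of
`H²_{n,α}` of norm at most `(1 − |b(0)|)^{−α}`, expressed as positivity of the
kernel `((1 − |b 0|)^{−2α} − g(z)·conj(g(w)))·(1 − ⟨z,w⟩)^{−α}`. -/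
theorem ball_reciprocal_kernel_multiplier
    (n : ℕ) (hn : 1 ≤ n)
    (b : EuclideanSpace ℂ (Fin n) → EuclideanSpace ℂ (Fin n))
    (hb_holo : DifferentiableOn ℂ b (ball (0 : EuclideanSpace ℂ (Fin n)) 1))
    (hb_maps : ∀ z ∈ ball (0 : EuclideanSpace ℂ (Fin n)) 1,
      b z ∈ ball (0 : EuclideanSpace ℂ (Fin n)) 1)
    (α : ℝ) (hα : 1 ≤ α)
    (hpos : IsPSDKernelOn
      (fun z w => ((1 - ∑ i, b z i * conj (b w i)) / (1 - ∑ i, z i * conj (w i))) ^ (α : ℂ))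
      (ball (0 : EuclideanSpace ℂ (Fin n)) 1))
    (g : EuclideanSpace ℂ (Fin n) → ℂ)
    (hg : ∀ z, g z = (1 - ∑ i, b z i * conj (b 0 i)) ^ (-(α : ℂ))) :
    IsPSDKernelOn
      (fun z w => ((((1 - ‖b 0‖) ^ (-(2 * α)) : ℝ) : ℂ) - g z * conj (g w)) *
        (1 - ∑ i, z i * conj (w i)) ^ (-(α : ℂ)))
      (ball (0 : EuclideanSpace ℂ (Fin n)) 1) :=
  ball_reciprocal_kernel_multiplier_general n b hb_maps α hα hpos g hg
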